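/- arXiv:1510.08706 — 2 statements merged into one kernel-verified Lean document; each statement's English description precedes it below -/
import Mathlib

section
/- Every connected multigraph (possibly with loops, multi-edges, and vertices of any degree ≥ 1) can be obtained from some connected 3-regular loopless multigraph with edges labelled 'real' or 'virtual' by contracting all virtual non-loop edges (identifying their endpoints) and deleting all virtual loops. Equivalently, the reduction map from labelled 3-regular loopless graphs to arbitrary connected multigraphs is surjective. -/
/-- A multigraph: finite vertex and edge types, each edge carrying an unordered pair of
endpoints.  Loops and multi-edges are allowed. -/
structure Multigraph where
  V : Type
  E : Type
  [fV : Finite V]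
  [fE : Finite E]
  ends : E → Sym2 V

attribute [instance] Multigraph.fV Multigraph.fE

/-- The underlying adjacency (simple) graph of a multigraph. -/
def Multigraph.adjGraph (G : Multigraph) : SimpleGraph G.V where
  Adj u v := u ≠ v ∧ ∃ e, G.ends e = s(u, v)
  symm := by
    constructor
    rintro u v ⟨huv, e, he⟩
    exact ⟨huv.symm, e, he.trans Sym2.eq_swap⟩
  loopless := by
    constructor
    rintro u ⟨h, -⟩
    exact h rfl

/-- Connectedness of a multigraph. -/
def Multigraph.Connected (G : Multigraph) : Prop := G.adjGraph.Connected

/-- A multigraph is loopless if no edge joins a vertex to itself. -/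
def Multigraph.Loopless (G : Multigraph) : Prop := ∀ e : G.E, ¬ (G.ends e).IsDiag

/-- A loopless multigraph is `k`-regular if every vertex is incident to exactly `k` edges. -/
def Multigraph.IsRegular (G : Multigraph) (k : ℕ) : Prop :=
  ∀ v : G.V, Nat.card {e : G.E // v ∈ G.ends e} = k

/-- Isomorphism of multigraphs. -/
structure Multigraph.Iso (G H : Multigraph) where
  vEquiv : G.V ≃ H.V
  eEquiv : G.E ≃ H.E
  ends_map : ∀ e, H.ends (eEquiv e) = Sym2.map vEquiv (G.ends e)

/-- A labelled multigraph: each edge is marked `real` (`true`) or `virtual` (`false`). -/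
structure LabelledMultigraph where
  toMultigraph : Multigraph
  real : toMultigraph.E → Bool

/-- Two vertices are related if some virtual edge joins them. -/
def LabelledMultigraph.virtualRel (H : LabelledMultigraph) (v w : H.toMultigraph.V) : Prop :=
  ∃ e, H.real e = false ∧ H.toMultigraph.ends e = s(v, w)

/-- **The reduction map** `π`: contract all virtual non-loop edges (identify their endpoints)
and delete all virtual loops.  Equivalently: quotient the vertex set by the equivalence
generated by the virtual edges and keep only the real edges. -/
def LabelledMultigraph.reduce (H : LabelledMultigraph) : Multigraph where
  V := Quot H.virtualRel
  E := {e : H.toMultigraph.E // H.real e = true}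
  ends := fun e => Sym2.map (Quot.mk H.virtualRel) (H.toMultigraph.ends e.1)


/-!
Blow every vertex `v` up into a cycle of virtual edges with `d + 2` vertices, `d` being the
number of edge-ends at `v`: each edge-end gets its own cycle vertex, where the corresponding
real edge is attached, and the two remaining cycle vertices are joined by one more virtual
edge. Every vertex then lies on two cycle edges and one further edge, so the result is
loopless and 3-regular; contracting the virtual edges collapses each cycle back to `v`, and
connectivity is inherited from `G` because each cycle is connected.
-/

theorem finRotate_apply_ne {n : ℕ} (hn : 2 ≤ n) (i : Fin n) : finRotate n i ≠ i :=
  Equiv.Perm.mem_support.mp (by simp [support_finRotate_of_le hn])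

theorem apply_eq_apply_of_apply_finRotate_eq {α : Type*} {n : ℕ} {f : Fin n → α}
    (hf : ∀ i, f (finRotate n i) = f i) (i j : Fin n) : f i = f j := by
  cases n with
  | zero => exact i.elim0
  | succ n =>
    suffices h : ∀ i, f i = f 0 from (h i).trans (h j).symm
    refine Fin.induction rfl fun i ih => ?_
    rw [← Fin.coeSucc_eq_succ, ← finRotate_apply, hf, ih]

namespace Finite

noncomputable def rotate (S : Type*) [Finite S] : Equiv.Perm S :=
  (Finite.equivFin S).symm.permCongr (finRotate (Nat.card S))

variable {S : Type*} [Finite S]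

theorem rotate_apply_ne (hS : 2 ≤ Nat.card S) (s : S) : rotate S s ≠ s := by
  intro h
  apply finRotate_apply_ne hS (Finite.equivFin S s)
  simpa [rotate] using congrArg (Finite.equivFin S) h

theorem apply_eq_apply_of_apply_rotate_eq {α : Type*} {f : S → α}
    (hf : ∀ s, f (rotate S s) = f s) (s t : S) : f s = f t := by
  have h := apply_eq_apply_of_apply_finRotate_eq (f := f ∘ (Finite.equivFin S).symm)
    (fun i => by simpa [rotate] using hf ((Finite.equivFin S).symm i))
    (Finite.equivFin S s) (Finite.equivFin S t)
  simpa using h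

end Finite

theorem SimpleGraph.Connected.of_reachable_fibers {V W : Type*} {G : SimpleGraph V}
    {H : SimpleGraph W} (hG : G.Connected) {p : W → V} (hp : Function.Surjective p)
    (hfiber : ∀ w w', p w = p w' → H.Reachable w w')
    (hadj : ∀ v v', G.Adj v v' → ∃ w w', p w = v ∧ p w' = v' ∧ H.Reachable w w') :
    H.Connected := by
  have hlift :
      ∀ v v', G.Reachable v v' → ∀ w w', p w = v → p w' = v' → H.Reachable w w' := by
    rintro v v' ⟨q⟩
    induction q with
    | nil => exact fun w w' hw hw' => hfiber w w' (hw.trans hw'.symm)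
    | cons h q ih =>
      intro w w' hw hw'
      obtain ⟨a, b, ha, rfl, hab⟩ := hadj _ _ h
      exact (hfiber w a (hw.trans ha.symm)).trans (hab.trans (ih b w' rfl hw'))
  obtain ⟨v⟩ := hG.nonempty
  obtain ⟨w, -⟩ := hp v
  exact (SimpleGraph.connected_iff H).mpr
    ⟨fun w w' => hlift _ _ (hG.preconnected _ _) w w' rfl rfl, ⟨w⟩⟩

namespace Multigraph

variable (G : Multigraph)

noncomputable def endpoint (e : G.E) (b : Bool) : G.V :=
  if b then (G.ends e).out.2 else (G.ends e).out.1

theorem ends_eq_endpoint (e : G.E) : G.ends e = s(G.endpoint e false, G.endpoint e true) :=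
  (Quot.out_eq (G.ends e)).symm

/-- The edge-ends at `v`; a loop at `v` contributes two. -/
abbrev Port (v : G.V) : Type := {d : G.E × Bool // G.endpoint d.1 d.2 = v}

/-- The vertices of the cycle that replaces `v`. -/
abbrev Slot (v : G.V) : Type := G.Port v ⊕ Fin 2

abbrev BlowupVertex : Type := Σ v : G.V, G.Slot v

/-- Cycle edges, spare edges (both virtual), and the real edges of `G`. -/
abbrev BlowupEdge : Type := (G.BlowupVertex ⊕ G.V) ⊕ G.E

noncomputable def portVertex (d : G.E × Bool) : G.BlowupVertex :=
  ⟨G.endpoint d.1 d.2, .inl ⟨d, rfl⟩⟩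

noncomputable def blowupEnds : G.BlowupEdge → Sym2 G.BlowupVertex
  | .inl (.inl ⟨v, s⟩) => s(⟨v, s⟩, ⟨v, Finite.rotate _ s⟩)
  | .inl (.inr v) => s(⟨v, .inr 0⟩, ⟨v, .inr 1⟩)
  | .inr e => s(G.portVertex (e, false), G.portVertex (e, true))

noncomputable def blowup : LabelledMultigraph where
  toMultigraph := ⟨G.BlowupVertex, G.BlowupEdge, G.blowupEnds⟩
  real := Sum.isRight

variable {G}

theorem two_le_card_slot (v : G.V) : 2 ≤ Nat.card (G.Slot v) := by
  simp [Nat.card_sum]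

theorem rotate_slot_ne (v : G.V) (s : G.Slot v) : Finite.rotate _ s ≠ s :=
  Finite.rotate_apply_ne (two_le_card_slot v) s

theorem portVertex_false_ne_true (e : G.E) :
    G.portVertex (e, false) ≠ G.portVertex (e, true) := by
  intro h
  have := congrArg (fun x : G.BlowupVertex => x.2.elim (fun p => p.1.2) fun _ => false) h
  simp [portVertex] at this

theorem blowup_loopless : G.blowup.toMultigraph.Loopless := by
  rintro ((⟨v, s⟩ | v) | e) h <;> simp only [blowup, blowupEnds, Sym2.mk_isDiag_iff] at h
  · exact rotate_slot_ne v s (sigma_mk_injective h).symm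
  · simpa using sigma_mk_injective h
  · exact portVertex_false_ne_true e h

theorem blowup_adj_portVertex (e : G.E) :
    G.blowup.toMultigraph.adjGraph.Adj (G.portVertex (e, false)) (G.portVertex (e, true)) :=
  ⟨portVertex_false_ne_true e, .inr e, rfl⟩

theorem blowup_reachable_of_fst_eq {x y : G.BlowupVertex} (h : x.1 = y.1) :
    G.blowup.toMultigraph.adjGraph.Reachable x y := by
  obtain ⟨v, s⟩ := x
  obtain ⟨w, t⟩ := y
  obtain rfl : v = w := h
  refine SimpleGraph.ConnectedComponent.exact (Finite.apply_eq_apply_of_apply_rotate_eq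
    (f := fun s => G.blowup.toMultigraph.adjGraph.connectedComponentMk ⟨v, s⟩)
    (fun s => ?_) s t)
  refine (SimpleGraph.ConnectedComponent.sound (SimpleGraph.Adj.reachable ?_)).symm
  exact ⟨fun h => rotate_slot_ne v s (sigma_mk_injective h).symm, .inl (.inl ⟨v, s⟩), rfl⟩

theorem blowup_connected (hG : G.Connected) : G.blowup.toMultigraph.Connected := by
  refine SimpleGraph.Connected.of_reachable_fibers hG (p := Sigma.fst)
    (fun v => ⟨⟨v, .inr 0⟩, rfl⟩) (fun _ _ => blowup_reachable_of_fst_eq) ?_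
  rintro v w ⟨-, e, he⟩
  rw [ends_eq_endpoint, Sym2.eq_iff] at he
  rcases he with ⟨rfl, rfl⟩ | ⟨rfl, rfl⟩
  · exact ⟨_, _, rfl, rfl, (blowup_adj_portVertex e).reachable⟩
  · exact ⟨_, _, rfl, rfl, (blowup_adj_portVertex e).reachable.symm⟩

/-- The edge at a cycle vertex other than its two cycle edges. -/
def transversalEdge (v : G.V) : G.Slot v → G.BlowupEdge
  | .inl p => .inr p.1.1
  | .inr _ => .inl (.inr v)

theorem mem_blowupEnds_iff (v : G.V) (s : G.Slot v) (e : G.BlowupEdge) :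
    ⟨v, s⟩ ∈ G.blowupEnds e ↔ e = .inl (.inl ⟨v, s⟩) ∨
      e = .inl (.inl ⟨v, (Finite.rotate _).symm s⟩) ∨ e = transversalEdge v s := by
  rcases e with ((⟨w, t⟩ | w) | e) <;> simp only [blowupEnds, Sym2.mem_iff]
  · constructor
    · rintro (h | h) <;> cases h
      · exact .inl rfl
      · exact .inr (.inl (by simp))
    · rintro (h | h | h)
      · cases h; exact .inl rfl
      · cases h; exact .inr (by simp)
      · cases s <;> cases h
  · constructor
    · rintro (h | h) <;> cases h <;> exact .inr (.inr rfl)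
    · rintro (h | h | h)
      · cases h
      · cases h
      · rcases s with _ | k
        · cases h
        · cases h
          fin_cases k <;> simp
  · constructor
    · rintro (h | h) <;> cases h <;> exact .inr (.inr rfl)
    · rintro (h | h | h)
      · cases h
      · cases h
      · rcases s with ⟨⟨e', b⟩, rfl⟩ | k
        · cases h
          cases b <;> simp [portVertex]
        · cases h

theorem blowup_isRegular : G.blowup.toMultigraph.IsRegular 3 := by
  rintro ⟨v, s⟩
  have hcycle : (Finite.rotate _).symm s ≠ s := by
    simpa using (rotate_slot_ne v ((Finite.rotate _).symm s)).symm
  change Nat.card {e | (⟨v, s⟩ : G.BlowupVertex) ∈ G.blowupEnds e} = 3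
  rw [Nat.card_coe_set_eq, Set.ncard_eq_three]
  refine ⟨_, _, _, ?_, ?_, ?_, Set.ext fun e => mem_blowupEnds_iff v s e⟩
  · simpa using hcycle.symm
  · cases s <;> nofun
  · cases s <;> nofun

theorem blowup_virtualRel_fst_eq {x y : G.BlowupVertex} (h : G.blowup.virtualRel x y) :
    x.1 = y.1 := by
  obtain ⟨((⟨v, s⟩ | v) | e), he, hxy⟩ := h
  · rcases Sym2.eq_iff.mp hxy with ⟨rfl, rfl⟩ | ⟨rfl, rfl⟩ <;> rfl
  · rcases Sym2.eq_iff.mp hxy with ⟨rfl, rfl⟩ | ⟨rfl, rfl⟩ <;> rfl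
  · cases he

theorem blowup_quotMk_eq (v : G.V) (s t : G.Slot v) :
    Quot.mk G.blowup.virtualRel ⟨v, s⟩ = Quot.mk G.blowup.virtualRel ⟨v, t⟩ :=
  Finite.apply_eq_apply_of_apply_rotate_eq
    (f := fun s => Quot.mk G.blowup.virtualRel (⟨v, s⟩ : G.BlowupVertex))
    (fun s => (Quot.sound ⟨.inl (.inl ⟨v, s⟩), rfl, rfl⟩).symm) s t

noncomputable def blowupReduceIso : G.blowup.reduce.Iso G where
  vEquiv :=
    { toFun := Quot.lift Sigma.fst fun _ _ => blowup_virtualRel_fst_eq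
      invFun := fun v => Quot.mk _ ⟨v, .inr 0⟩
      left_inv := Quot.ind fun ⟨v, s⟩ => blowup_quotMk_eq v _ s
      right_inv := fun _ => rfl }
  eEquiv := Equiv.sumIsRight
  ends_map := by
    rintro ⟨_ | e, he⟩
    · cases he
    · exact G.ends_eq_endpoint e

end Multigraph

/-- **Surjectivity of the reduction map onto connected multigraphs.**
Every connected multigraph (possibly with loops, multi-edges and vertices of any degree) is
obtained, up to isomorphism, by reducing some connected, loopless, 3-regular labelled
multigraph. -/
theorem stmt4 (G : Multigraph) (hG : G.Connected) :
    ∃ H : LabelledMultigraph,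
      H.toMultigraph.Connected ∧ H.toMultigraph.Loopless ∧ H.toMultigraph.IsRegular 3 ∧
      Nonempty (H.reduce.Iso G) :=
  ⟨G.blowup, Multigraph.blowup_connected hG, Multigraph.blowup_loopless,
    Multigraph.blowup_isRegular, ⟨Multigraph.blowupReduceIso⟩⟩
end

section
/- Let c > 0 be real and let j₁, j₂, j₃ be nonnegative reals satisfying the Clebsch–Gordan (triangle) conditions |j₁ − j₂| ≤ j₃ ≤ j₁ + j₂. Define ℓ(j) := √(j(j+1) + c). Then the strict triangle inequality ℓ(j₁) + ℓ(j₂) > ℓ(j₃) holds. In particular √(j₁(j₁+1)+c) + √(j₂(j₂+1)+c) > √((j₁+j₂)(j₁+j₂+1)+c). -/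
/-- **Clebsch–Gordan conditions imply strict triangle inequalities for quantum lengths.**
Let `c > 0` and let `j₁, j₂, j₃ ≥ 0` satisfy `|j₁ − j₂| ≤ j₃ ≤ j₁ + j₂`.  With
`ℓ(j) = √(j(j+1) + c)`, the strict triangle inequality `ℓ(j₁) + ℓ(j₂) > ℓ(j₃)` holds; in
particular `√(j₁(j₁+1)+c) + √(j₂(j₂+1)+c) > √((j₁+j₂)(j₁+j₂+1)+c)`. -/
theorem stmt15 (c : ℝ) (hc : 0 < c) (j₁ j₂ j₃ : ℝ)
    (h1 : 0 ≤ j₁) (h2 : 0 ≤ j₂) (h3 : 0 ≤ j₃)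
    (hlow : |j₁ - j₂| ≤ j₃) (hhigh : j₃ ≤ j₁ + j₂) :
    Real.sqrt (j₁ * (j₁ + 1) + c) + Real.sqrt (j₂ * (j₂ + 1) + c)
        > Real.sqrt (j₃ * (j₃ + 1) + c) ∧
    Real.sqrt (j₁ * (j₁ + 1) + c) + Real.sqrt (j₂ * (j₂ + 1) + c)
        > Real.sqrt ((j₁ + j₂) * ((j₁ + j₂) + 1) + c) := by
  have hA : (0:ℝ) ≤ j₁ * (j₁ + 1) + c := by nlinarith
  have hB : (0:ℝ) ≤ j₂ * (j₂ + 1) + c := by nlinarith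
  have hsA : j₁ ≤ Real.sqrt (j₁ * (j₁ + 1) + c) :=
    (Real.le_sqrt h1 hA).mpr (by nlinarith)
  have hsB : j₂ ≤ Real.sqrt (j₂ * (j₂ + 1) + c) :=
    (Real.le_sqrt h2 hB).mpr (by nlinarith)
  have key : Real.sqrt (j₁ * (j₁ + 1) + c) + Real.sqrt (j₂ * (j₂ + 1) + c)
      > Real.sqrt ((j₁ + j₂) * ((j₁ + j₂) + 1) + c) := by
    have hnnA := Real.sqrt_nonneg (j₁ * (j₁ + 1) + c)
    have hnnB := Real.sqrt_nonneg (j₂ * (j₂ + 1) + c)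
    have hsqA := Real.sq_sqrt hA
    have hsqB := Real.sq_sqrt hB
    have hlt : (j₁ + j₂) * ((j₁ + j₂) + 1) + c
        < (Real.sqrt (j₁ * (j₁ + 1) + c) + Real.sqrt (j₂ * (j₂ + 1) + c))^2 := by
      have hprod : j₁ * j₂ ≤ Real.sqrt (j₁ * (j₁ + 1) + c) * Real.sqrt (j₂ * (j₂ + 1) + c) :=
        mul_le_mul hsA hsB h2 hnnA
      nlinarith
    calc Real.sqrt ((j₁ + j₂) * ((j₁ + j₂) + 1) + c)
        < Real.sqrt ((Real.sqrt (j₁ * (j₁ + 1) + c) + Real.sqrt (j₂ * (j₂ + 1) + c))^2) :=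
          Real.sqrt_lt_sqrt (by nlinarith) hlt
      _ = _ := Real.sqrt_sq (by positivity)
  refine ⟨lt_of_le_of_lt ?_ key, key⟩
  apply Real.sqrt_le_sqrt
  nlinarith
end
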